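/- Let (X,d) be a Polish metric space and a,b>0. For all finite nonnegative Borel measures μ₁,μ₂ on X, W₁^{a,b}(μ₁,μ₂) ≥ sup over (φ₁,φ₂) ∈ Φ_W of Σ_{i=1,2} ∫_X I(φᵢ(x)) dμᵢ(x), where I(φ) = inf_{s≥0}(sφ + a|1−s|) and Φ_W is the set of pairs (φ₁,φ₂) of bounded continuous functions on X with φ₁(x)+φ₂(y) ≤ b·d(x,y) and φ₁(x), φ₂(y) ≥ −a for all x,y ∈ X. -/

import Mathlib

open MeasureTheory ENNReal

section GW

variable {X : Type*} [MeasurableSpace X] [MetricSpace X]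

/-- A transference plan between two finite measures `μ` and `ν` of equal mass:
a Borel probability measure `π` on `X × X` with `|μ| π(A × X) = μ A` and
`|ν| π(X × B) = ν B`. -/
def IsCoupling (μ ν : Measure X) (π : Measure (X × X)) : Prop :=
  IsProbabilityMeasure π ∧
  (∀ A : Set X, MeasurableSet A → μ Set.univ * π (A ×ˢ (Set.univ : Set X)) = μ A) ∧
  (∀ B : Set X, MeasurableSet B → ν Set.univ * π ((Set.univ : Set X) ×ˢ B) = ν B)

/-- The (mass-scaled) `p`-Wasserstein distance
`W_p(μ,ν) = (|μ| ⨅_π ∫ d(x,y)^p dπ)^{1/p}`, as an extended nonnegative real. -/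
noncomputable def WpE (p : ℝ) (μ ν : Measure X) : ℝ≥0∞ :=
  (μ Set.univ * ⨅ π : {π : Measure (X × X) // IsCoupling μ ν π},
      ∫⁻ z, edist z.1 z.2 ^ p ∂(π.1)) ^ (1 / p)

/-- `μ ∈ M_p(X)`: `μ` is a finite (nonnegative Borel) measure with finite `p`-moment. -/
def MemMp (p : ℝ) (μ : Measure X) : Prop :=
  IsFiniteMeasure μ ∧ ∀ x₀ : X, ∫⁻ x, edist x x₀ ^ p ∂μ ≠ ∞

/-- Total variation mass `|μ - ν|` of the difference of two (finite) measures,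
as an extended nonnegative real. -/
noncomputable def tvE (μ ν : Measure X) : ℝ≥0∞ := (μ - ν) Set.univ + (ν - μ) Set.univ

/-- Total variation mass `|μ - ν|` as a real number. -/
noncomputable def tv (μ ν : Measure X) : ℝ := (tvE μ ν).toReal

/-- The generalized Wasserstein distance
`W_p^{a,b}(μ,ν) = inf { a|μ-μ'| + a|ν-ν'| + b W_p(μ',ν') : μ',ν' ∈ M_p(X), |μ'|=|ν'| }`,
as an extended nonnegative real. -/
noncomputable def genWE (a b p : ℝ) (μ ν : Measure X) : ℝ≥0∞ :=
  ⨅ (μ' : Measure X) (ν' : Measure X) (_ : MemMp p μ') (_ : MemMp p ν')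
      (_ : μ' Set.univ = ν' Set.univ),
    ENNReal.ofReal a * tvE μ μ' + ENNReal.ofReal a * tvE ν ν' +
      ENNReal.ofReal b * WpE p μ' ν'

/-- The generalized Wasserstein distance `W_p^{a,b}` as a real number. -/
noncomputable def genW (a b p : ℝ) (μ ν : Measure X) : ℝ := (genWE a b p μ ν).toReal

/-- `I(φ) = inf_{s ≥ 0} (sφ + a|1-s|)`. -/
noncomputable def Idual (a φ : ℝ) : ℝ :=
  sInf {v : ℝ | ∃ s : ℝ, 0 ≤ s ∧ v = s * φ + a * |1 - s|}

end GW

/-!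
Since `φᵢ ≥ -a`, the infimum defining `I(φᵢ)` is attained at `s = 0` or `s = 1`, so
`I(φᵢ) = min φᵢ a =: ψᵢ`, and `|ψᵢ| ≤ a`. For an admissible pair `(μ', ν')`,
`∫ ψ₁ dμ₁ - ∫ ψ₁ dμ' ≤ a |μ₁ - μ'|` (split along a Hahn decomposition), likewise for `ψ₂`,
and for every coupling `π` of `μ', ν'` the marginal conditions give
`∫ ψ₁ dμ' + ∫ ψ₂ dν' = |μ'| ∫ (ψ₁ x + ψ₂ y) dπ ≤ b |μ'| ∫ d(x, y) dπ`.
Adding the three bounds and taking infima yields the inequality.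
-/

open Set
open scoped BoundedContinuousFunction

lemma Idual_eq_min {a φ : ℝ} (hφ : -a ≤ φ) : Idual a φ = min φ a := by
  refine IsLeast.csInf_eq ⟨?_, ?_⟩
  · rcases le_total φ a with h | h
    · exact ⟨1, zero_le_one, by simp [h]⟩
    · exact ⟨0, le_rfl, by simp [h]⟩
  · rintro v ⟨s, hs, rfl⟩
    -- for `s ≤ 1` the value is a convex combination of `φ` and `a`; for `s ≥ 1` it is
    -- `φ + (s - 1) (φ + a)`
    rcases le_total s 1 with hs1 | hs1
    · rw [abs_of_nonneg (sub_nonneg.2 hs1)]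
      linarith [mul_nonneg hs (sub_nonneg.2 (min_le_left φ a)),
        mul_nonneg (sub_nonneg.2 hs1) (sub_nonneg.2 (min_le_right φ a))]
    · rw [abs_of_nonpos (sub_nonpos.2 hs1)]
      linarith [mul_nonneg (sub_nonneg.2 hs1) (neg_le_iff_add_nonneg.1 hφ), min_le_left φ a]

lemma ofReal_integral_le_lintegral_ofReal {α : Type*} [MeasurableSpace α] {μ : Measure α}
    (f : α → ℝ) : ENNReal.ofReal (∫ x, f x ∂μ) ≤ ∫⁻ x, ENNReal.ofReal (f x) ∂μ := by
  by_cases hf : Integrable f μ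
  · rw [integral_eq_lintegral_pos_part_sub_lintegral_neg_part hf]
    exact (ENNReal.ofReal_le_ofReal (sub_le_self _ ENNReal.toReal_nonneg)).trans
      ENNReal.ofReal_toReal_le
  · simp [integral_undef hf]

namespace MeasureTheory.Measure

variable {α : Type*} [MeasurableSpace α] {μ ν : Measure α}

lemma add_sub_eq_restrict_add_restrict [IsFiniteMeasure μ] {s : Set α} (hs : MeasurableSet s)
    (hνμ : ν.restrict s ≤ μ.restrict s) (hμν : μ.restrict sᶜ ≤ ν.restrict sᶜ) :
    μ + (ν - μ) = μ.restrict s + ν.restrict sᶜ := by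
  have hsub : ν - μ = ν.restrict sᶜ - μ.restrict sᶜ := by
    rw [← (ν - μ).restrict_add_restrict_compl hs, restrict_sub_eq_restrict_sub_restrict hs,
      restrict_sub_eq_restrict_sub_restrict hs.compl, sub_eq_zero_of_le hνμ, zero_add]
  rw [hsub]
  nth_rw 1 [← μ.restrict_add_restrict_compl hs]
  rw [add_assoc, add_comm (μ.restrict sᶜ), sub_add_cancel_of_le hμν]

lemma add_sub_eq_add_sub_comm [IsFiniteMeasure μ] [IsFiniteMeasure ν] :
    μ + (ν - μ) = ν + (μ - ν) := by
  obtain ⟨s, hs, hνμ, hμν⟩ := hahn_decomposition μ ν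
  have restrict_le {ρ ρ' : Measure α} {t : Set α} (ht : MeasurableSet t)
      (h : ∀ u, MeasurableSet u → u ⊆ t → ρ u ≤ ρ' u) : ρ.restrict t ≤ ρ'.restrict t :=
    Measure.le_iff.2 fun u hu => by
      simpa only [restrict_apply hu] using h _ (hu.inter ht) inter_subset_right
  rw [add_sub_eq_restrict_add_restrict hs (restrict_le hs hνμ) (restrict_le hs.compl hμν),
    add_sub_eq_restrict_add_restrict hs.compl (restrict_le hs.compl hμν)
      (by simpa only [compl_compl] using restrict_le hs hνμ), compl_compl, add_comm]

end MeasureTheory.Measure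

section TotalVariation

variable {α : Type*} [MeasurableSpace α] {μ ν : Measure α} [IsFiniteMeasure μ] [IsFiniteMeasure ν]

lemma tvE_ne_top : tvE μ ν ≠ ∞ :=
  ENNReal.add_ne_top.2 ⟨measure_ne_top _ _, measure_ne_top _ _⟩

lemma integral_sub_integral_le_mul_tv {f : α → ℝ} (hf : Measurable f) {C : ℝ}
    (hC : ∀ x, ‖f x‖ ≤ C) : ∫ x, f x ∂μ - ∫ x, f x ∂ν ≤ C * tv μ ν := by
  have hint (ρ : Measure α) [IsFiniteMeasure ρ] : Integrable f ρ :=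
    .of_bound hf.aestronglyMeasurable C (.of_forall hC)
  have hbound (ρ : Measure α) [IsFiniteMeasure ρ] : |∫ x, f x ∂ρ| ≤ C * ρ.real univ :=
    norm_integral_le_of_norm_le_const (.of_forall hC)
  have hsplit : ∫ x, f x ∂μ + ∫ x, f x ∂(ν - μ) = ∫ x, f x ∂ν + ∫ x, f x ∂(μ - ν) := by
    rw [← integral_add_measure (hint μ) (hint _), ← integral_add_measure (hint ν) (hint _),
      Measure.add_sub_eq_add_sub_comm]
  have htv : tv μ ν = (μ - ν).real univ + (ν - μ).real univ :=
    ENNReal.toReal_add (measure_ne_top _ _) (measure_ne_top _ _)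
  rw [htv]
  linarith [le_abs_self (∫ x, f x ∂(μ - ν)), neg_abs_le (∫ x, f x ∂(ν - μ)),
    hbound (μ - ν), hbound (ν - μ)]

lemma ofReal_integral_sub_integral_le_mul_tvE {f : α → ℝ} (hf : Measurable f) {C : ℝ}
    (hC : ∀ x, ‖f x‖ ≤ C) :
    ENNReal.ofReal (∫ x, f x ∂μ - ∫ x, f x ∂ν) ≤ ENNReal.ofReal C * tvE μ ν := by
  calc ENNReal.ofReal (∫ x, f x ∂μ - ∫ x, f x ∂ν) ≤ ENNReal.ofReal (C * tv μ ν) :=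
        ENNReal.ofReal_le_ofReal (integral_sub_integral_le_mul_tv hf hC)
    _ = ENNReal.ofReal C * tvE μ ν := by
        rw [tv, ENNReal.ofReal_mul' ENNReal.toReal_nonneg, ENNReal.ofReal_toReal tvE_ne_top]

end TotalVariation

namespace IsCoupling

variable {X : Type*} [MeasurableSpace X] {μ ν : Measure X} {π : Measure (X × X)}

lemma eq_smul_map_fst (h : IsCoupling μ ν π) : μ = μ univ • π.map Prod.fst := by
  ext A hA
  rw [Measure.smul_apply, smul_eq_mul, Measure.map_apply measurable_fst hA, ← prod_univ]
  exact (h.2.1 A hA).symm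

lemma eq_smul_map_snd (h : IsCoupling μ ν π) : ν = ν univ • π.map Prod.snd := by
  ext B hB
  rw [Measure.smul_apply, smul_eq_mul, Measure.map_apply measurable_snd hB, ← univ_prod]
  exact (h.2.2 B hB).symm

lemma integral_add_integral_eq [TopologicalSpace X] [OpensMeasurableSpace X]
    (h : IsCoupling μ ν π) (hmass : μ univ = ν univ) (f g : X →ᵇ ℝ) :
    ∫ x, f x ∂μ + ∫ x, g x ∂ν = (μ univ).toReal * ∫ z, (f z.1 + g z.2) ∂π := by
  have := h.1
  have hf : Integrable (fun z : X × X => f z.1) π :=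
    (f.integrable _).comp_measurable measurable_fst
  have hg : Integrable (fun z : X × X => g z.2) π :=
    (g.integrable _).comp_measurable measurable_snd
  rw [integral_add hf hg, mul_add]
  congr 1
  · conv_lhs => rw [h.eq_smul_map_fst]
    rw [integral_smul_measure, integral_map measurable_fst.aemeasurable
      f.continuous.aestronglyMeasurable, smul_eq_mul]
  · conv_lhs => rw [h.eq_smul_map_snd, ← hmass]
    rw [integral_smul_measure, integral_map measurable_snd.aemeasurable
      g.continuous.aestronglyMeasurable, smul_eq_mul]

lemma ofReal_integral_add_integral_le [MetricSpace X] [OpensMeasurableSpace X]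
    [IsFiniteMeasure μ] (h : IsCoupling μ ν π) (hmass : μ univ = ν univ) {b : ℝ} (hb : 0 ≤ b)
    (f g : X →ᵇ ℝ) (hfg : ∀ x y, f x + g y ≤ b * dist x y) :
    ENNReal.ofReal (∫ x, f x ∂μ + ∫ x, g x ∂ν) ≤
      ENNReal.ofReal b * μ univ * ∫⁻ z, edist z.1 z.2 ∂π := by
  rw [h.integral_add_integral_eq hmass, ENNReal.ofReal_mul ENNReal.toReal_nonneg,
    ENNReal.ofReal_toReal (measure_ne_top μ univ)]
  calc μ univ * ENNReal.ofReal (∫ z, (f z.1 + g z.2) ∂π)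
      ≤ μ univ * ∫⁻ z, ENNReal.ofReal b * edist z.1 z.2 ∂π := by
        gcongr
        refine (ofReal_integral_le_lintegral_ofReal _).trans (lintegral_mono fun z => ?_)
        rw [edist_dist, ← ENNReal.ofReal_mul hb]
        exact ENNReal.ofReal_le_ofReal (hfg z.1 z.2)
    _ = ENNReal.ofReal b * μ univ * ∫⁻ z, edist z.1 z.2 ∂π := by
        rw [lintegral_const_mul' _ _ ENNReal.ofReal_ne_top]
        ring

end IsCoupling

section GeneralizedWasserstein

variable {X : Type*} [MeasurableSpace X] [MetricSpace X]

lemma WpE_one (μ ν : Measure X) :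
    WpE 1 μ ν = μ univ * ⨅ π : {π : Measure (X × X) // IsCoupling μ ν π},
      ∫⁻ z, edist z.1 z.2 ∂π.1 := by
  simp [WpE]

lemma ofReal_integral_add_integral_le_WpE_one [OpensMeasurableSpace X] {μ ν : Measure X}
    [IsFiniteMeasure μ] (hmass : μ univ = ν univ) {b : ℝ} (hb : 0 < b) (f g : X →ᵇ ℝ)
    (hfg : ∀ x y, f x + g y ≤ b * dist x y) :
    ENNReal.ofReal (∫ x, f x ∂μ + ∫ x, g x ∂ν) ≤ ENNReal.ofReal b * WpE 1 μ ν := by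
  rcases eq_or_ne (μ univ) 0 with h0 | h0
  · have hμ : μ = 0 := Measure.measure_univ_eq_zero.1 h0
    have hν : ν = 0 := Measure.measure_univ_eq_zero.1 (hmass ▸ h0)
    simp [hμ, hν]
  rw [WpE_one, ← mul_assoc, ENNReal.mul_iInf_of_ne (mul_ne_zero (ENNReal.ofReal_pos.2 hb).ne' h0)
    (ENNReal.mul_ne_top ENNReal.ofReal_ne_top (measure_ne_top μ univ))]
  exact le_iInf fun π => π.2.ofReal_integral_add_integral_le hmass hb.le f g hfg

lemma genWE_ne_top (a b : ℝ) {p : ℝ} (hp : 0 ≤ p) (μ ν : Measure X) [IsFiniteMeasure μ]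
    [IsFiniteMeasure ν] : genWE a b p μ ν ≠ ∞ := by
  have hzero : MemMp p (0 : Measure X) := ⟨inferInstance, fun _ => by simp⟩
  have hW : WpE p (0 : Measure X) 0 ≠ ∞ := by
    simpa [WpE] using ENNReal.rpow_ne_top_of_nonneg (one_div_nonneg.2 hp) ENNReal.zero_ne_top
  refine ne_top_of_le_ne_top ?_ (iInf_le_of_le 0 <| iInf_le_of_le 0 <| iInf_le_of_le hzero <|
    iInf_le_of_le hzero <| iInf_le _ rfl)
  simp [ENNReal.mul_ne_top, tvE_ne_top, hW]

end GeneralizedWasserstein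

theorem genW_ge_dual_general
    {X : Type*} [MeasurableSpace X] [MetricSpace X] [BorelSpace X]
    (a b : ℝ) (ha : 0 < a) (hb : 0 < b)
    (μ₁ μ₂ : Measure X) [IsFiniteMeasure μ₁] [IsFiniteMeasure μ₂]
    (φ₁ φ₂ : BoundedContinuousFunction X ℝ)
    (hφ : ∀ x y : X, φ₁ x + φ₂ y ≤ b * dist x y)
    (hφ₁ : ∀ x : X, -a ≤ φ₁ x) (hφ₂ : ∀ y : X, -a ≤ φ₂ y) :
    ∫ x, Idual a (φ₁ x) ∂μ₁ + ∫ x, Idual a (φ₂ x) ∂μ₂ ≤ genW a b 1 μ₁ μ₂ := by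
  set ψ₁ := φ₁ ⊓ BoundedContinuousFunction.const X a
  set ψ₂ := φ₂ ⊓ BoundedContinuousFunction.const X a
  have hψ_le (φ : X →ᵇ ℝ) (hφ : ∀ x, -a ≤ φ x) (x : X) : ‖(φ ⊓ .const X a) x‖ ≤ a :=
    abs_le.2 ⟨le_min (hφ x) (by simp only [BoundedContinuousFunction.const_apply]; linarith),
      min_le_right _ _⟩
  have hψ : ∀ x y, ψ₁ x + ψ₂ y ≤ b * dist x y := fun x y =>
    (add_le_add (min_le_left _ _) (min_le_left _ _)).trans (hφ x y)
  rw [integral_congr_ae (.of_forall fun x => Idual_eq_min (hφ₁ x)),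
    integral_congr_ae (.of_forall fun x => Idual_eq_min (hφ₂ x)), genW,
    ← ENNReal.ofReal_le_iff_le_toReal (genWE_ne_top a b zero_le_one μ₁ μ₂)]
  refine le_iInf fun μ' => le_iInf fun ν' => le_iInf fun hμ' => le_iInf fun hν' =>
    le_iInf fun hmass => ?_
  have := hμ'.1
  have := hν'.1
  calc ENNReal.ofReal (∫ x, ψ₁ x ∂μ₁ + ∫ x, ψ₂ x ∂μ₂)
      = ENNReal.ofReal ((∫ x, ψ₁ x ∂μ₁ - ∫ x, ψ₁ x ∂μ') + (∫ x, ψ₂ x ∂μ₂ - ∫ x, ψ₂ x ∂ν') +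
          (∫ x, ψ₁ x ∂μ' + ∫ x, ψ₂ x ∂ν')) := by congr 1; ring
    _ ≤ ENNReal.ofReal (∫ x, ψ₁ x ∂μ₁ - ∫ x, ψ₁ x ∂μ') +
          ENNReal.ofReal (∫ x, ψ₂ x ∂μ₂ - ∫ x, ψ₂ x ∂ν') +
          ENNReal.ofReal (∫ x, ψ₁ x ∂μ' + ∫ x, ψ₂ x ∂ν') :=
        ENNReal.ofReal_add_le.trans (add_le_add_left ENNReal.ofReal_add_le _)
    _ ≤ _ := add_le_add_three
        (ofReal_integral_sub_integral_le_mul_tvE ψ₁.continuous.measurable (hψ_le φ₁ hφ₁))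
        (ofReal_integral_sub_integral_le_mul_tvE ψ₂.continuous.measurable (hψ_le φ₂ hφ₂))
        (ofReal_integral_add_integral_le_WpE_one hmass hb ψ₁ ψ₂ hψ)

/-- **Easy inequality in the Kantorovich duality for `W₁^{a,b}`** (Lemma 5.2).
For every `(φ₁,φ₂) ∈ Φ_W`, `W₁^{a,b}(μ₁,μ₂) ≥ Σᵢ ∫ I(φᵢ) dμᵢ`; that is,
`W₁^{a,b}(μ₁,μ₂)` dominates the dual supremum. -/
theorem genW_ge_dual
    {X : Type*} [MeasurableSpace X] [MetricSpace X] [BorelSpace X]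
    [TopologicalSpace.SeparableSpace X] [CompleteSpace X]
    (a b : ℝ) (ha : 0 < a) (hb : 0 < b)
    (μ₁ μ₂ : Measure X) [IsFiniteMeasure μ₁] [IsFiniteMeasure μ₂]
    (φ₁ φ₂ : BoundedContinuousFunction X ℝ)
    (hφ : ∀ x y : X, φ₁ x + φ₂ y ≤ b * dist x y)
    (hφ₁ : ∀ x : X, -a ≤ φ₁ x) (hφ₂ : ∀ y : X, -a ≤ φ₂ y) :
    ∫ x, Idual a (φ₁ x) ∂μ₁ + ∫ x, Idual a (φ₂ x) ∂μ₂ ≤ genW a b 1 μ₁ μ₂ :=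
  genW_ge_dual_general a b ha hb μ₁ μ₂ φ₁ φ₂ hφ hφ₁ hφ₂
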